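/- arXiv:1709.10462 — 7 statements merged into one kernel-verified Lean document; each statement's English description precedes it below -/
import Mathlib

section
/- A regular k-uniform intersecting family F on [n] satisfies n ≤ k² - k + 1. -/
/-!
Fix a point `x` and let `d` be the common degree, `m = #F`. By regularity,
`∑_{A ∋ x} ∑_{B ∈ F} |A ∩ B| = k d²`. The terms with `B ∌ x` contribute at least `d (m - d)`
because `F` is intersecting, and those with `B ∋ x` contribute `∑_y λ(y)²`, where `λ(y)` counts
the members of `F` containing both `x` and `y`. As `λ(x) = d` and `∑_y λ(y) = d k`,
Cauchy–Schwarz over `y ≠ x` yields `(n - 1) m + d (k - 1)² ≤ (n - 1) k d`; together with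
`n d = m k` this says `(n - k) (n - (k² - k + 1)) ≤ 0`.
-/

open Finset

theorem sq_sum_sub_le_card_sub_one_mul {ι R : Type*} [Fintype ι] [DecidableEq ι] [CommRing R]
    [LinearOrder R] [IsStrictOrderedRing R] (f : ι → R) (i : ι) :
    (∑ j, f j - f i) ^ 2 ≤ (Fintype.card ι - 1) * (∑ j, f j ^ 2 - f i ^ 2) := by
  have hi := mem_univ i
  have := sq_sum_le_card_mul_sum_sq (s := univ.erase i) (f := f)
  rwa [sum_erase_eq_sub hi, sum_erase_eq_sub hi, card_erase_of_mem hi, card_univ,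
    Nat.cast_pred (Fintype.card_pos_iff.2 ⟨i⟩)] at this

namespace SetFamily

variable {α : Type*} [DecidableEq α]

def degree (F : Finset (Finset α)) (y : α) : ℕ := #{A ∈ F | y ∈ A}

theorem sum_card_inter_eq_sum_degree (A : Finset α) (H : Finset (Finset α)) :
    ∑ B ∈ H, #(A ∩ B) = ∑ y ∈ A, degree H y := by
  simp_rw [degree, ← filter_mem_eq_inter, card_eq_sum_ones, sum_filter]
  exact sum_comm

theorem card_mul_card_le_sum_sum_card_inter {G H : Finset (Finset α)}
    (hint : ∀ A ∈ G, ∀ B ∈ H, (A ∩ B).Nonempty) :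
    #G * #H ≤ ∑ A ∈ G, ∑ B ∈ H, #(A ∩ B) := by
  calc #G * #H = ∑ _A ∈ G, ∑ _B ∈ H, 1 := by simp
    _ ≤ ∑ A ∈ G, ∑ B ∈ H, #(A ∩ B) :=
      sum_le_sum fun A hA => sum_le_sum fun B hB => card_pos.2 (hint A hA B hB)

theorem degree_filter_mem_self (F : Finset (Finset α)) (x : α) :
    degree {A ∈ F | x ∈ A} x = degree F x := by
  simp only [degree, filter_filter, and_self]

variable [Fintype α]

theorem sum_sum_eq_sum_degree_mul (G : Finset (Finset α)) (f : α → ℕ) :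
    ∑ A ∈ G, ∑ y ∈ A, f y = ∑ y, degree G y * f y := by
  simp_rw [degree, card_eq_sum_ones, sum_filter, sum_mul, ite_mul, one_mul, zero_mul]
  rw [sum_comm]
  simp

theorem sum_sum_card_inter (G H : Finset (Finset α)) :
    ∑ A ∈ G, ∑ B ∈ H, #(A ∩ B) = ∑ y, degree G y * degree H y := by
  simp_rw [sum_card_inter_eq_sum_degree, sum_sum_eq_sum_degree_mul]

theorem sum_degree (G : Finset (Finset α)) : ∑ y, degree G y = ∑ A ∈ G, #A := by
  simpa using (sum_sum_eq_sum_degree_mul G 1).symm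

variable {F : Finset (Finset α)} {k d : ℕ}

theorem mul_card_add_sum_sq_degree_star_le (hcard : ∀ A ∈ F, #A = k)
    (hint : ∀ A ∈ F, ∀ B ∈ F, (A ∩ B).Nonempty) (hdeg : ∀ y, degree F y = d) (x : α) :
    d * #F + ∑ y, degree {A ∈ F | x ∈ A} y ^ 2 ≤ (k + 1) * d ^ 2 := by
  set star := {A ∈ F | x ∈ A}
  set rest := {A ∈ F | x ∉ A}
  have hstar : #star = d := hdeg x
  have hsplit : #star + #rest = #F := card_filter_add_card_filter_not _
  have htotal : ∑ A ∈ star, ∑ B ∈ F, #(A ∩ B) = k * d * d := by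
    rw [sum_congr rfl fun A hA => (sum_card_inter fun y _ => hdeg y).trans
      (congrArg (· * d) (hcard A (mem_filter.1 hA).1)), sum_const, hstar, smul_eq_mul]
    ring
  have hinner : ∑ A ∈ star, ∑ B ∈ star, #(A ∩ B) = ∑ y, degree star y ^ 2 := by
    simp_rw [sum_sum_card_inter, sq]
  have houter : d * #rest ≤ ∑ A ∈ star, ∑ B ∈ rest, #(A ∩ B) := hstar ▸
    card_mul_card_le_sum_sum_card_inter fun A hA B hB =>
      hint A (mem_filter.1 hA).1 B (mem_filter.1 hB).1
  have hcount : ∑ A ∈ star, ∑ B ∈ F, #(A ∩ B) =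
      ∑ A ∈ star, ∑ B ∈ star, #(A ∩ B) + ∑ A ∈ star, ∑ B ∈ rest, #(A ∩ B) := by
    rw [← sum_add_distrib]
    exact sum_congr rfl fun A _ => (sum_filter_add_sum_filter_not F _ _).symm
  rw [← hsplit, hstar]
  linarith

theorem card_sub_one_mul_card_add_le (hcard : ∀ A ∈ F, #A = k)
    (hint : ∀ A ∈ F, ∀ B ∈ F, (A ∩ B).Nonempty) (hdeg : ∀ y, degree F y = d) (hd : 0 < d)
    (x : α) :
    ((Fintype.card α : ℤ) - 1) * #F + d * (k - 1) ^ 2 ≤ (Fintype.card α - 1) * k * d := by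
  set codegree := degree {A ∈ F | x ∈ A}
  have hstar := mul_card_add_sum_sq_degree_star_le hcard hint hdeg x
  have hx : codegree x = d := (degree_filter_mem_self F x).trans (hdeg x)
  have hsum : ∑ y, codegree y = d * k := by
    rw [sum_degree, sum_congr rfl fun A hA => hcard A (mem_filter.1 hA).1, sum_const,
      smul_eq_mul, ← degree, hdeg x]
  have hcs := sq_sum_sub_le_card_sub_one_mul (fun y => (codegree y : ℤ)) x
  have hn : (1 : ℤ) ≤ Fintype.card α := by exact_mod_cast Fintype.card_pos_iff.2 ⟨x⟩
  simp only [← Nat.cast_sum, ← Nat.cast_pow, hsum, hx] at hcs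
  have hstarZ : (d * #F + ∑ y, codegree y ^ 2 : ℤ) ≤ (k + 1) * d ^ 2 := by exact_mod_cast hstar
  push_cast at hcs
  refine le_of_mul_le_mul_left ?_ (Nat.cast_pos.2 hd : (0 : ℤ) < d)
  nlinarith [mul_le_mul_of_nonneg_left hstarZ (sub_nonneg.2 hn)]

end SetFamily

theorem Int.le_sq_sub_self_add_one {n m k d : ℤ} (hk : 0 ≤ k) (hd : 0 < d) (hnd : n * d = m * k)
    (h : (n - 1) * m + d * (k - 1) ^ 2 ≤ (n - 1) * k * d) : n ≤ k ^ 2 - k + 1 := by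
  have hprod : d * ((n - k) * (n - (k ^ 2 - k + 1))) ≤ 0 := by
    linear_combination mul_le_mul_of_nonneg_left h hk + (n - 1) * hnd
  have hquad : (n - k) * (n - (k ^ 2 - k + 1)) ≤ 0 := nonpos_of_mul_nonpos_right hprod hd
  -- `k ≤ k ^ 2 - k + 1`, so `n` lies between the two roots
  nlinarith

theorem bound_on_n (n k : ℕ) (F : Finset (Finset (Fin n)))
    (hF : F.Nonempty)
    (hcard : ∀ A ∈ F, A.card = k)
    (hint : ∀ A ∈ F, ∀ B ∈ F, (A ∩ B).Nonempty)
    (hreg : ∀ x y : Fin n,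
      (F.filter (fun A => x ∈ A)).card = (F.filter (fun A => y ∈ A)).card) :
    n ≤ k ^ 2 - k + 1 := by
  obtain ⟨A₀, hA₀⟩ := hF
  obtain ⟨x, hx⟩ := hint A₀ hA₀ A₀ hA₀
  set d := SetFamily.degree F x
  have hdeg : ∀ y, SetFamily.degree F y = d := fun y => hreg y x
  have hd : 0 < d := card_pos.2 ⟨A₀, mem_filter.2 ⟨hA₀, (mem_inter.1 hx).1⟩⟩
  have hdouble : n * d = #F * k := by
    have := sum_card hdeg
    rwa [Fintype.card_fin, sum_congr rfl hcard, sum_const, smul_eq_mul, eq_comm] at this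
  have hbound := SetFamily.card_sub_one_mul_card_add_le hcard hint hdeg hd x
  rw [Fintype.card_fin] at hbound
  zify [Nat.le_self_pow two_ne_zero k]
  exact Int.le_sq_sub_self_add_one (by positivity) (by exact_mod_cast hd)
    (by exact_mod_cast hdouble) hbound
end

section
/- Let F be a regular k-uniform intersecting family on [n] with n = k² - k + 1. Then |F| = k² - k + 1, each element of [n] has degree k, and any two distinct sets in F intersect in exactly one point (i.e., F is a projective plane of order k-1). -/
open Finset

private lemma sum_comm4 {α β M : Type*} [AddCommMonoid M] (s t : Finset α) (u v : Finset β)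
    (f : α → α → β → β → M) :
    ∑ a ∈ s, ∑ b ∈ t, ∑ x ∈ u, ∑ y ∈ v, f a b x y
      = ∑ x ∈ u, ∑ y ∈ v, ∑ a ∈ s, ∑ b ∈ t, f a b x y := by
  calc ∑ a ∈ s, ∑ b ∈ t, ∑ x ∈ u, ∑ y ∈ v, f a b x y
      = ∑ a ∈ s, ∑ x ∈ u, ∑ b ∈ t, ∑ y ∈ v, f a b x y :=
        Finset.sum_congr rfl fun a _ => Finset.sum_comm
    _ = ∑ x ∈ u, ∑ a ∈ s, ∑ b ∈ t, ∑ y ∈ v, f a b x y := Finset.sum_comm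
    _ = ∑ x ∈ u, ∑ a ∈ s, ∑ y ∈ v, ∑ b ∈ t, f a b x y :=
        Finset.sum_congr rfl fun x _ => Finset.sum_congr rfl fun a _ => Finset.sum_comm
    _ = ∑ x ∈ u, ∑ y ∈ v, ∑ a ∈ s, ∑ b ∈ t, f a b x y :=
        Finset.sum_congr rfl fun x _ => Finset.sum_comm

private lemma two_mul_le_nat (a b : ℕ) : 2 * (a * b) ≤ a * a + b * b := by
  have h : (2 * ((a:ℤ) * b)) ≤ (a:ℤ) * a + (b:ℤ) * b := by nlinarith [sq_nonneg ((a:ℤ) - b)]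
  exact_mod_cast h

theorem char_proj_plane (n k : ℕ) (hk : 2 ≤ k) (hn : n = k ^ 2 - k + 1)
    (F : Finset (Finset (Fin n)))
    (hF : F.Nonempty)
    (hcard : ∀ A ∈ F, A.card = k)
    (hint : ∀ A ∈ F, ∀ B ∈ F, (A ∩ B).Nonempty)
    (hreg : ∀ x y : Fin n,
      (F.filter (fun A => x ∈ A)).card = (F.filter (fun A => y ∈ A)).card) :
    F.card = k ^ 2 - k + 1 ∧
    (∀ x : Fin n, (F.filter (fun A => x ∈ A)).card = k) ∧
    (∀ A ∈ F, ∀ B ∈ F, A ≠ B → (A ∩ B).card = 1) := by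
  have hkk : k * k = k ^ 2 := (sq k).symm
  have hkk2 : k ≤ k ^ 2 := by nlinarith
  have hnk : n + k = k ^ 2 + 1 := by omega
  have hnpos : 0 < n := by omega
  have hkn : k ≤ n := by nlinarith
  -- degree
  set deg : Fin n → ℕ := fun x => (F.filter (fun A => x ∈ A)).card with hdegdef
  set d : ℕ := deg ⟨0, hnpos⟩ with hd_def
  have hdeg : ∀ x : Fin n, deg x = d := fun x => hreg x ⟨0, hnpos⟩
  have hdeg_sum : ∀ x : Fin n, deg x = ∑ A ∈ F, (if x ∈ A then 1 else 0) :=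
    fun x => Finset.card_filter _ _
  -- card expansions
  have h_card_inter : ∀ A B : Finset (Fin n),
      (A ∩ B).card = ∑ x : Fin n, (if x ∈ A ∧ x ∈ B then 1 else 0) := by
    intro A B
    rw [show A ∩ B = univ.filter (fun x => x ∈ A ∧ x ∈ B) by ext x; simp]
    exact Finset.card_filter _ _
  have h_card_mem : ∀ A : Finset (Fin n), A.card = ∑ x : Fin n, (if x ∈ A then 1 else 0) := by
    intro A
    rw [show A.card = (univ.filter (fun x => x ∈ A)).card by congr 1; ext x; simp]
    exact Finset.card_filter _ _
  set m : ℕ := F.card with hm_def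
  -- incidence count : m * k = n * d
  have hmk : m * k = n * d := by
    have h1 : ∑ A ∈ F, A.card = m * k := by
      rw [Finset.sum_congr rfl hcard, Finset.sum_const, smul_eq_mul]
    have h2 : ∑ A ∈ F, A.card = ∑ x : Fin n, deg x := by
      calc ∑ A ∈ F, A.card = ∑ A ∈ F, ∑ x : Fin n, (if x ∈ A then 1 else 0) :=
            Finset.sum_congr rfl fun A _ => h_card_mem A
        _ = ∑ x : Fin n, ∑ A ∈ F, (if x ∈ A then 1 else 0) := Finset.sum_comm
        _ = ∑ x : Fin n, deg x := Finset.sum_congr rfl fun x _ => (hdeg_sum x).symm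
    have h3 : ∑ x : Fin n, deg x = n * d := by
      rw [Finset.sum_congr rfl fun x _ => hdeg x, Finset.sum_const, smul_eq_mul,
        Finset.card_univ, Fintype.card_fin]
    rw [← h1, h2, h3]
  -- k ∣ d
  have hco : Nat.Coprime k n := by
    have h1 : (k - 1) * k = k * k - k := Nat.sub_one_mul k k
    have : n = 1 + (k - 1) * k := by omega
    rw [this]
    simpa using Nat.coprime_add_mul_left_right k 1 (k - 1)
  obtain ⟨c, hdc⟩ : k ∣ d := hco.dvd_of_dvd_mul_left ⟨m, by rw [← hmk]; ring⟩
  have hmnc : m = n * c := by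
    have hkpos : 0 < k := by omega
    have : m * k = (n * c) * k := by rw [hmk, hdc]; ring
    exact Nat.eq_of_mul_eq_mul_right hkpos this
  -- lam
  set lam : Fin n → Fin n → ℕ :=
    fun x y => (F.filter (fun A => x ∈ A ∧ y ∈ A)).card with hlam_def
  have hlam_sum : ∀ x y : Fin n, lam x y = ∑ A ∈ F, (if x ∈ A ∧ y ∈ A then 1 else 0) :=
    fun x y => Finset.card_filter _ _
  have hlam_diag : ∀ x : Fin n, lam x x = d := by
    intro x
    have : F.filter (fun A => x ∈ A ∧ x ∈ A) = F.filter (fun A => x ∈ A) := by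
      ext A; simp
    rw [hlam_sum x x, ← hdeg x, hdeg_sum x]
    exact Finset.sum_congr rfl fun A _ => by simp
  -- tf
  set tf : Finset (Fin n) → Fin n → ℕ :=
    fun A x => ∑ C ∈ F, (if x ∈ C then (A ∩ C).card else 0) with htf_def
  -- ∑_C (A∩C).card = A.card * d
  have hT : ∀ A : Finset (Fin n), ∑ C ∈ F, (A ∩ C).card = A.card * d := by
    intro A
    calc ∑ C ∈ F, (A ∩ C).card
        = ∑ C ∈ F, ∑ x : Fin n, (if x ∈ A ∧ x ∈ C then 1 else 0) :=
          Finset.sum_congr rfl fun C _ => h_card_inter A C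
      _ = ∑ x : Fin n, ∑ C ∈ F, (if x ∈ A ∧ x ∈ C then 1 else 0) := Finset.sum_comm
      _ = ∑ x : Fin n, (if x ∈ A then d else 0) := by
          refine Finset.sum_congr rfl fun x _ => ?_
          by_cases hx : x ∈ A
          · simp only [hx, true_and, if_true]
            rw [← hdeg x, hdeg_sum x]
          · simp [hx]
      _ = (univ ∩ A).card * d := by
          rw [Finset.sum_ite_mem, Finset.sum_const, smul_eq_mul]
      _ = A.card * d := by rw [univ_inter]
  -- per-A pieces
  have h2a : ∀ A ∈ F, ∑ x : Fin n, tf A x = (k * d) * k := by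
    intro A hA
    calc ∑ x : Fin n, tf A x
        = ∑ C ∈ F, ∑ x : Fin n, (if x ∈ C then (A ∩ C).card else 0) := Finset.sum_comm
      _ = ∑ C ∈ F, C.card * (A ∩ C).card := by
          refine Finset.sum_congr rfl fun C _ => ?_
          rw [Finset.sum_ite_mem, univ_inter, Finset.sum_const, smul_eq_mul]
      _ = ∑ C ∈ F, k * (A ∩ C).card := by
          refine Finset.sum_congr rfl fun C hC => ?_
          rw [hcard C hC]
      _ = k * ∑ C ∈ F, (A ∩ C).card := by rw [Finset.mul_sum]
      _ = (k * d) * k := by rw [hT A, hcard A hA]; ring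
  have h2b : ∀ A : Finset (Fin n),
      ∑ x ∈ A, tf A x = ∑ C ∈ F, (A ∩ C).card * (A ∩ C).card := by
    intro A
    calc ∑ x ∈ A, tf A x
        = ∑ C ∈ F, ∑ x ∈ A, (if x ∈ C then (A ∩ C).card else 0) := Finset.sum_comm
      _ = ∑ C ∈ F, (A ∩ C).card * (A ∩ C).card := by
          refine Finset.sum_congr rfl fun C _ => ?_
          rw [Finset.sum_ite_mem, Finset.sum_const, smul_eq_mul]
  have hXA : ∀ A ∈ F,
      (∑ x ∈ Aᶜ, tf A x) + ∑ C ∈ F, (A ∩ C).card * (A ∩ C).card = (k * d) * k := by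
    intro A hA
    have h0 := Finset.sum_add_sum_compl A (tf A)
    rw [h2b A] at h0
    have h1 := h2a A hA
    omega
  -- S and its swap
  set S : ℕ := ∑ A ∈ F, ∑ B ∈ F, (A ∩ B).card * (A ∩ B).card with hS_def
  have hS_swap : S = ∑ x : Fin n, ∑ y : Fin n, lam x y * lam x y := by
    have e1 : S = ∑ A ∈ F, ∑ B ∈ F, ∑ x : Fin n, ∑ y : Fin n,
        (if x ∈ A ∧ x ∈ B then 1 else 0) * (if y ∈ A ∧ y ∈ B then 1 else 0) := by
      rw [hS_def]
      refine Finset.sum_congr rfl fun A _ => Finset.sum_congr rfl fun B _ => ?_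
      rw [h_card_inter A B, Finset.sum_mul_sum]
    rw [e1, sum_comm4]
    refine Finset.sum_congr rfl fun x _ => Finset.sum_congr rfl fun y _ => ?_
    rw [hlam_sum x y, Finset.sum_mul_sum]
    refine Finset.sum_congr rfl fun A _ => Finset.sum_congr rfl fun B _ => ?_
    by_cases h1 : x ∈ A <;> by_cases h2 : y ∈ A <;> by_cases h3 : x ∈ B <;>
      by_cases h4 : y ∈ B <;> simp [h1, h2, h3, h4]
  -- full lambda sum
  have hfull : ∑ x : Fin n, ∑ y : Fin n, lam x y = m * (k * k) := by
    calc ∑ x : Fin n, ∑ y : Fin n, lam x y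
        = ∑ x : Fin n, ∑ y : Fin n, ∑ A ∈ F, (if x ∈ A ∧ y ∈ A then 1 else 0) :=
          Finset.sum_congr rfl fun x _ => Finset.sum_congr rfl fun y _ => hlam_sum x y
      _ = ∑ x : Fin n, ∑ A ∈ F, ∑ y : Fin n, (if x ∈ A ∧ y ∈ A then 1 else 0) :=
          Finset.sum_congr rfl fun x _ => Finset.sum_comm
      _ = ∑ A ∈ F, ∑ x : Fin n, ∑ y : Fin n, (if x ∈ A ∧ y ∈ A then 1 else 0) :=
          Finset.sum_comm
      _ = ∑ A ∈ F, (k * k) := by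
          refine Finset.sum_congr rfl fun A hA => ?_
          calc ∑ x : Fin n, ∑ y : Fin n, (if x ∈ A ∧ y ∈ A then (1:ℕ) else 0)
              = ∑ x : Fin n, ∑ y : Fin n,
                  (if x ∈ A then (1:ℕ) else 0) * (if y ∈ A then 1 else 0) :=
                Finset.sum_congr rfl fun x _ => Finset.sum_congr rfl fun y _ => by
                  by_cases h1 : x ∈ A <;> by_cases h2 : y ∈ A <;> simp [h1, h2]
            _ = (∑ x : Fin n, if x ∈ A then (1:ℕ) else 0) *
                  (∑ y : Fin n, if y ∈ A then (1:ℕ) else 0) := (Finset.sum_mul_sum _ _ _ _).symm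
            _ = k * k := by rw [← h_card_mem A, hcard A hA]
      _ = m * (k * k) := by rw [Finset.sum_const, smul_eq_mul]
  -- diagonal splits
  set Loff : ℕ := ∑ x : Fin n, ∑ y ∈ univ.erase x, lam x y with hLoff_def
  set Soff : ℕ := ∑ x : Fin n, ∑ y ∈ univ.erase x, lam x y * lam x y with hSoff_def
  have hsplit1 : m * (k * k) = n * d + Loff := by
    have h1 : ∀ x : Fin n, ∑ y : Fin n, lam x y = d + ∑ y ∈ univ.erase x, lam x y := by
      intro x
      rw [← Finset.add_sum_erase _ _ (mem_univ x), hlam_diag x]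
    calc m * (k * k) = ∑ x : Fin n, ∑ y : Fin n, lam x y := hfull.symm
      _ = ∑ x : Fin n, (d + ∑ y ∈ univ.erase x, lam x y) := Finset.sum_congr rfl fun x _ => h1 x
      _ = ∑ x : Fin n, d + Loff := by rw [Finset.sum_add_distrib]
      _ = n * d + Loff := by
          rw [Finset.sum_const, smul_eq_mul, Finset.card_univ, Fintype.card_fin]
  have hsplit2 : S = n * (d * d) + Soff := by
    have h1 : ∀ x : Fin n, ∑ y : Fin n, lam x y * lam x y
        = d * d + ∑ y ∈ univ.erase x, lam x y * lam x y := by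
      intro x
      rw [← Finset.add_sum_erase _ (fun y => lam x y * lam x y) (mem_univ x), hlam_diag x]
    calc S = ∑ x : Fin n, ∑ y : Fin n, lam x y * lam x y := hS_swap
      _ = ∑ x : Fin n, (d * d + ∑ y ∈ univ.erase x, lam x y * lam x y) :=
          Finset.sum_congr rfl fun x _ => h1 x
      _ = ∑ x : Fin n, (d * d) + Soff := by rw [Finset.sum_add_distrib]
      _ = n * (d * d) + Soff := by
          rw [Finset.sum_const, smul_eq_mul, Finset.card_univ, Fintype.card_fin]
  -- variance inequality
  have hvar : 2 * (c * Loff) ≤ Soff + n * ((n - 1) * (c * c)) := by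
    calc 2 * (c * Loff)
        = ∑ x : Fin n, ∑ y ∈ univ.erase x, 2 * (c * lam x y) := by
          rw [hLoff_def]; simp only [Finset.mul_sum]
      _ ≤ ∑ x : Fin n, ∑ y ∈ univ.erase x, (lam x y * lam x y + c * c) := by
          refine Finset.sum_le_sum fun x _ => Finset.sum_le_sum fun y _ => ?_
          have h := two_mul_le_nat c (lam x y)
          omega
      _ = ∑ x : Fin n, (∑ y ∈ univ.erase x, lam x y * lam x y + (n - 1) * (c * c)) := by
          refine Finset.sum_congr rfl fun x _ => ?_
          rw [Finset.sum_add_distrib, Finset.sum_const, smul_eq_mul,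
            Finset.card_erase_of_mem (mem_univ x), Finset.card_univ, Fintype.card_fin]
      _ = Soff + n * ((n - 1) * (c * c)) := by
          rw [Finset.sum_add_distrib, Finset.sum_const, smul_eq_mul,
            Finset.card_univ, Fintype.card_fin, hSoff_def]
  -- X
  set X : ℕ := ∑ A ∈ F, ∑ x ∈ Aᶜ, tf A x with hX_def
  have hXS : X + S = m * ((k * d) * k) := by
    rw [hX_def, hS_def, ← Finset.sum_add_distrib, Finset.sum_congr rfl hXA,
      Finset.sum_const, smul_eq_mul]
  have htf_ge : ∀ A ∈ F, ∀ x : Fin n, d ≤ tf A x := by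
    intro A hA x
    have h1 : (∑ C ∈ F, if x ∈ C then 1 else 0) ≤ tf A x := by
      refine Finset.sum_le_sum fun C hC => ?_
      by_cases hx : x ∈ C
      · simp only [hx, if_true]
        exact Finset.card_pos.mpr (hint A hA C hC)
      · simp [hx]
    rw [← hdeg x, hdeg_sum x]
    exact h1
  have hAlow : ∀ A ∈ F, (n - k) * d ≤ ∑ x ∈ Aᶜ, tf A x := by
    intro A hA
    have h1 : ∑ x ∈ Aᶜ, d ≤ ∑ x ∈ Aᶜ, tf A x :=
      Finset.sum_le_sum fun x _ => htf_ge A hA x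
    have h2 : (Aᶜ : Finset (Fin n)).card = n - k := by
      rw [Finset.card_compl, Fintype.card_fin, hcard A hA]
    rwa [Finset.sum_const, smul_eq_mul, h2] at h1
  have hXge : m * ((n - k) * d) ≤ X := by
    rw [hX_def]
    calc m * ((n - k) * d) = ∑ _A ∈ F, (n - k) * d := by rw [Finset.sum_const, smul_eq_mul]
      _ ≤ ∑ A ∈ F, ∑ x ∈ Aᶜ, tf A x := Finset.sum_le_sum hAlow
  -- the sandwich (in ℤ)
  have hm1 : 1 ≤ m := hF.card_pos
  have hXeq : X = m * ((n - k) * d) := by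
    refine le_antisymm ?_ hXge
    zify [hkn]
    have z1 : (X : ℤ) + S = m * ((k * d) * k) := by exact_mod_cast hXS
    have z2 : (m : ℤ) * (k * k) = n * d + Loff := by exact_mod_cast hsplit1
    have z3 : (S : ℤ) = n * (d * d) + Soff := by exact_mod_cast hsplit2
    have z4 : (2 : ℤ) * (c * Loff) ≤ Soff + n * (((n : ℤ) - 1) * (c * c)) := by
      have h5 : ((n - 1 : ℕ) : ℤ) = (n : ℤ) - 1 := by omega
      calc (2 : ℤ) * ((c : ℤ) * Loff) = ((2 * (c * Loff) : ℕ) : ℤ) := by push_cast; ring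
        _ ≤ ((Soff + n * ((n - 1) * (c * c)) : ℕ) : ℤ) := by exact_mod_cast hvar
        _ = (Soff : ℤ) + n * (((n : ℤ) - 1) * (c * c)) := by push_cast [h5]; ring
    have zc : (d : ℤ) = k * c := by exact_mod_cast hdc
    have zm : (m : ℤ) = n * c := by exact_mod_cast hmnc
    have zn : (n : ℤ) + k = (k : ℤ) ^ 2 + 1 := by exact_mod_cast hnk
    have z5 : (Loff : ℤ) = m * (k * k) - n * d := by linarith
    have hvar2 : (2 : ℤ) * (c * ((m : ℤ) * (k * k) - n * d))
        ≤ Soff + n * (((n : ℤ) - 1) * (c * c)) := by rw [← z5]; exact z4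
    have hident : (m : ℤ) * ((k * d) * k) - n * (d * d)
          - (2 * ((c : ℤ) * ((m : ℤ) * (k * k) - n * d)) - n * (((n : ℤ) - 1) * (c * c)))
        = (m : ℤ) * (((n : ℤ) - k) * d) := by
      have zn2 : (n : ℤ) = (k : ℤ) ^ 2 + 1 - k := by linarith
      rw [zc, zm, zn2]; ring
    linarith
  -- extraction: every pairwise intersection has size 1
  have hA_eq : ∀ A ∈ F, ∑ x ∈ Aᶜ, tf A x = (n - k) * d := by
    have h := (Finset.sum_eq_sum_iff_of_le hAlow).mp ?_
    · intro A hA; exact (h A hA).symm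
    · rw [Finset.sum_const, smul_eq_mul, ← hX_def, hXeq]
  have hx_eq : ∀ A ∈ F, ∀ x ∈ (Aᶜ : Finset (Fin n)), tf A x = d := by
    intro A hA
    have hle : ∀ x ∈ (Aᶜ : Finset (Fin n)), d ≤ tf A x := fun x _ => htf_ge A hA x
    have hsum : ∑ x ∈ Aᶜ, d = ∑ x ∈ Aᶜ, tf A x := by
      rw [hA_eq A hA, Finset.sum_const, smul_eq_mul, Finset.card_compl,
        Fintype.card_fin, hcard A hA]
    intro x hx
    exact ((Finset.sum_eq_sum_iff_of_le hle).mp hsum x hx).symm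
  have hone : ∀ A ∈ F, ∀ B ∈ F, A ≠ B → (A ∩ B).card = 1 := by
    intro A hA B hB hAB
    have hBA : ¬ B ⊆ A := by
      intro hsub
      exact hAB ((Finset.eq_of_subset_of_card_le hsub
        (by rw [hcard A hA, hcard B hB])).symm)
    obtain ⟨x, hxB, hxA⟩ := Finset.not_subset.mp hBA
    have hxc : x ∈ (Aᶜ : Finset (Fin n)) := Finset.mem_compl.mpr hxA
    have htx : tf A x = d := hx_eq A hA x hxc
    have hle : ∀ C ∈ F, (if x ∈ C then 1 else 0) ≤ (if x ∈ C then (A ∩ C).card else 0) := by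
      intro C hC
      by_cases hx : x ∈ C
      · simp only [hx, if_true]
        exact Finset.card_pos.mpr (hint A hA C hC)
      · simp [hx]
    have hsum : ∑ C ∈ F, (if x ∈ C then 1 else 0)
        = ∑ C ∈ F, (if x ∈ C then (A ∩ C).card else 0) := by
      rw [← hdeg_sum x, hdeg x, ← htx, htf_def]
    have := (Finset.sum_eq_sum_iff_of_le hle).mp hsum B hB
    rw [if_pos hxB, if_pos hxB] at this
    exact this.symm
  -- final count
  have hkd2 : k * d + 1 = k + m := by
    obtain ⟨A, hA⟩ := hF
    have h1 : ∑ B ∈ F, (A ∩ B).card = k + (m - 1) := by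
      rw [← Finset.add_sum_erase _ _ hA, Finset.inter_self, hcard A hA]
      congr 1
      calc ∑ B ∈ F.erase A, (A ∩ B).card = ∑ B ∈ F.erase A, 1 :=
            Finset.sum_congr rfl fun B hB => by
              obtain ⟨hBA, hBF⟩ := Finset.mem_erase.mp hB
              exact hone A hA B hBF (fun h => hBA h.symm)
        _ = m - 1 := by
            rw [Finset.sum_const, smul_eq_mul, mul_one, Finset.card_erase_of_mem hA]
    have h2 : ∑ B ∈ F, (A ∩ B).card = k * d := by rw [hT A, hcard A hA]
    omega
  -- solve for d and m
  have hdk : d = k := by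
    have zkd : (k : ℤ) * d + 1 = k + m := by exact_mod_cast hkd2
    have zmk : (m : ℤ) * k = n * d := by exact_mod_cast hmk
    have zn : (n : ℤ) + k = (k : ℤ) ^ 2 + 1 := by exact_mod_cast hnk
    have h9 : ((d : ℤ) - k) * ((k : ℤ) - 1) = 0 := by
      linear_combination (k : ℤ) * zkd + zmk + (d : ℤ) * zn
    have hk2 : (2 : ℤ) ≤ (k : ℤ) := by exact_mod_cast hk
    rcases mul_eq_zero.mp h9 with h | h
    · have : (d : ℤ) = k := by linarith
      exact_mod_cast this
    · exfalso; linarith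
  have hmfin : m = k ^ 2 - k + 1 := by
    have h1 := hkd2
    rw [hdk] at h1
    omega
  refine ⟨hmfin, ?_, hone⟩
  intro x
  have h1 : deg x = d := hdeg x
  rw [hdk] at h1
  exact h1
end

section
/- If a nonempty regular k-uniform intersecting family F on [n] exists with n < k², then |F| ≥ 1 + k(n-k)/(k² - n). -/
theorem lower_bnd (n k : ℕ) (hn : n < k ^ 2) (F : Finset (Finset (Fin n)))
    (hF : F.Nonempty)
    (hcard : ∀ A ∈ F, A.card = k)
    (hint : ∀ A ∈ F, ∀ B ∈ F, (A ∩ B).Nonempty)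
    (hreg : ∀ x y : Fin n,
      (F.filter (fun A => x ∈ A)).card = (F.filter (fun A => y ∈ A)).card) :
    (F.card : ℚ) ≥ 1 + (k : ℚ) * ((n : ℚ) - k) / ((k : ℚ) ^ 2 - n) := by
  obtain ⟨A, hA⟩ := hF
  have hAcard := hcard A hA
  have hk1 : 1 ≤ k := by
    have h := hint A hA A hA
    rw [Finset.inter_self] at h
    have := Finset.card_pos.mpr h
    omega
  have hkn : k ≤ n := by
    have := Finset.card_le_univ A
    simpa [hAcard] using this
  have hn1 : 1 ≤ n := le_trans hk1 hkn
  set x₀ : Fin n := ⟨0, hn1⟩ with hx₀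
  set d := (F.filter (fun B => x₀ ∈ B)).card with hd
  have hregd : ∀ x : Fin n, (F.filter (fun B => x ∈ B)).card = d := fun x => hreg x x₀
  have h1 : n * d = F.card * k := by
    calc n * d = ∑ _x : Fin n, d := by simp [Finset.sum_const, mul_comm]
    _ = ∑ x : Fin n, (F.filter (fun B => x ∈ B)).card := by
        exact Finset.sum_congr rfl (fun x _ => (hregd x).symm)
    _ = ∑ x : Fin n, ∑ B ∈ F, (if x ∈ B then 1 else 0) := by
        exact Finset.sum_congr rfl (fun x _ => Finset.card_filter _ _)
    _ = ∑ B ∈ F, ∑ x : Fin n, (if x ∈ B then 1 else 0) := Finset.sum_comm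
    _ = ∑ B ∈ F, B.card := by
        refine Finset.sum_congr rfl (fun B _ => ?_)
        simp [Finset.sum_ite_mem]
    _ = F.card * k := by
        rw [Finset.sum_congr rfl (fun B hB => hcard B hB), Finset.sum_const, smul_eq_mul]
  have h2 : k * d = ∑ B ∈ F, (A ∩ B).card := by
    calc k * d = ∑ _x ∈ A, d := by simp [Finset.sum_const, hAcard, mul_comm]
    _ = ∑ x ∈ A, (F.filter (fun B => x ∈ B)).card := by
        exact Finset.sum_congr rfl (fun x _ => (hregd x).symm)
    _ = ∑ x ∈ A, ∑ B ∈ F, (if x ∈ B then 1 else 0) := by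
        exact Finset.sum_congr rfl (fun x _ => Finset.card_filter _ _)
    _ = ∑ B ∈ F, ∑ x ∈ A, (if x ∈ B then 1 else 0) := Finset.sum_comm
    _ = ∑ B ∈ F, (A ∩ B).card := by
        refine Finset.sum_congr rfl (fun B _ => ?_)
        simp [Finset.sum_ite_mem]
  have h3 : k + (F.card - 1) ≤ k * d := by
    rw [h2, ← Finset.add_sum_erase F _ hA, Finset.inter_self, hAcard]
    have herase : (F.erase A).card ≤ ∑ B ∈ F.erase A, (A ∩ B).card := by
      have := Finset.card_nsmul_le_sum (F.erase A) (fun B => (A ∩ B).card) 1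
        (fun B hB => Finset.card_pos.mpr (hint A hA B (Finset.mem_of_mem_erase hB)))
      simpa using this
    rw [Finset.card_erase_of_mem hA] at herase
    omega
  have key : n * (k + (F.card - 1)) ≤ F.card * k ^ 2 := by
    calc n * (k + (F.card - 1)) ≤ n * (k * d) := Nat.mul_le_mul_left _ h3
    _ = k * (n * d) := by ring
    _ = k * (F.card * k) := by rw [h1]
    _ = F.card * k ^ 2 := by ring
  have hm : 1 ≤ F.card := Finset.card_pos.mpr ⟨A, hA⟩
  have hq : (n : ℚ) * (k + ((F.card : ℚ) - 1)) ≤ (F.card : ℚ) * (k : ℚ) ^ 2 := by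
    have : ((n * (k + (F.card - 1)) : ℕ) : ℚ) ≤ ((F.card * k ^ 2 : ℕ) : ℚ) := by
      exact_mod_cast key
    push_cast [Nat.cast_sub hm] at this
    convert this using 2 <;> push_cast [Nat.cast_sub hm] <;> ring
  have hpos : (0 : ℚ) < (k : ℚ) ^ 2 - n := by
    have : (n : ℚ) < (k : ℚ) ^ 2 := by exact_mod_cast hn
    linarith
  have hfin : (k : ℚ) * ((n : ℚ) - k) / ((k : ℚ) ^ 2 - n) ≤ (F.card : ℚ) - 1 := by
    rw [div_le_iff₀ hpos]
    nlinarith [hq]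
  linarith
end

section
/- Let F ⊆ binom(X,k) be a regular intersecting family, and let l be an integer with 1 ≤ l < min{|F₁ \ F₂| : F₁, F₂ ∈ F, F₁ ≠ F₂}. Then the family F^l := {F' ∈ binom(X, k+l) : F' ⊇ F for some F ∈ F} is intersecting, regular, and has size C(|X|-k, l)·|F|. -/
lemma count_sup_aux {α : Type*} [DecidableEq α] (X S : Finset α) (hSX : S ⊆ X) (m : ℕ)
    (hm : S.card ≤ m) :
    ((X.powersetCard m).filter (fun C => S ⊆ C)).card
      = (X.card - S.card).choose (m - S.card) := by
  rw [← Finset.card_sdiff_of_subset hSX, ← Finset.card_powersetCard]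
  apply Finset.card_bij' (fun C _ => C \ S) (fun D _ => D ∪ S)
  · intro C hC
    simp only [Finset.mem_filter, Finset.mem_powersetCard] at hC ⊢
    obtain ⟨⟨hCX, hCc⟩, hSC⟩ := hC
    exact ⟨Finset.sdiff_subset_sdiff hCX le_rfl, by rw [Finset.card_sdiff_of_subset hSC, hCc]⟩
  · intro D hD
    simp only [Finset.mem_filter, Finset.mem_powersetCard] at hD ⊢
    obtain ⟨hDX, hDc⟩ := hD
    have hdisj : Disjoint D S := (Finset.sdiff_disjoint.mono_left hDX)
    refine ⟨⟨Finset.union_subset (hDX.trans Finset.sdiff_subset) hSX, ?_⟩,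
      Finset.subset_union_right⟩
    rw [Finset.card_union_of_disjoint hdisj, hDc]
    omega
  · intro C hC
    simp only [Finset.mem_filter] at hC
    exact Finset.sdiff_union_of_subset hC.2
  · intro D hD
    simp only [Finset.mem_powersetCard] at hD
    have hdisj : Disjoint D S := (Finset.sdiff_disjoint.mono_left hD.1)
    rw [Finset.union_sdiff_right, Finset.sdiff_eq_self_of_disjoint hdisj]

theorem extension_construction {α : Type*} [DecidableEq α] (X : Finset α)
    (k l : ℕ) (hl : 1 ≤ l) (hkl : k + l ≤ X.card)
    (F : Finset (Finset α))
    (hF2 : 2 ≤ F.card)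
    (hFX : ∀ A ∈ F, A ⊆ X)
    (hFk : ∀ A ∈ F, A.card = k)
    (hFint : ∀ A ∈ F, ∀ A' ∈ F, (A ∩ A').Nonempty)
    (hFreg : ∀ x ∈ X, ∀ y ∈ X,
      (F.filter (fun A => x ∈ A)).card = (F.filter (fun A => y ∈ A)).card)
    (hmin : ∀ A ∈ F, ∀ B ∈ F, A ≠ B → l < (A \ B).card) :
    (∀ C ∈ (X.powersetCard (k + l)).filter (fun C => ∃ A ∈ F, A ⊆ C),
       ∀ C' ∈ (X.powersetCard (k + l)).filter (fun C => ∃ A ∈ F, A ⊆ C),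
       (C ∩ C').Nonempty) ∧
    (∀ x ∈ X, ∀ y ∈ X,
       (((X.powersetCard (k + l)).filter (fun C => ∃ A ∈ F, A ⊆ C)).filter
          (fun C => x ∈ C)).card =
       (((X.powersetCard (k + l)).filter (fun C => ∃ A ∈ F, A ⊆ C)).filter
          (fun C => y ∈ C)).card) ∧
    ((X.powersetCard (k + l)).filter (fun C => ∃ A ∈ F, A ⊆ C)).card =
      (X.card - k).choose l * F.card := by
  -- Uniqueness of the base set
  have huniq : ∀ A ∈ F, ∀ B ∈ F, ∀ C ∈ X.powersetCard (k + l),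
      A ⊆ C → B ⊆ C → A = B := by
    intro A hA B hB C hC hAC hBC
    by_contra hne
    have h1 := hmin A hA B hB hne
    have h2 : A \ B ⊆ C \ B := Finset.sdiff_subset_sdiff hAC le_rfl
    have h3 : (C \ B).card = l := by
      rw [Finset.mem_powersetCard] at hC
      rw [Finset.card_sdiff_of_subset hBC, hC.2, hFk B hB]
      omega
    have := Finset.card_le_card h2
    omega
  constructor
  · -- intersecting
    intro C hC C' hC'
    simp only [Finset.mem_filter] at hC hC'
    obtain ⟨_, A, hA, hAC⟩ := hC
    obtain ⟨_, A', hA', hAC'⟩ := hC'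
    obtain ⟨z, hz⟩ := hFint A hA A' hA'
    simp only [Finset.mem_inter] at hz
    exact ⟨z, Finset.mem_inter.2 ⟨hAC hz.1, hAC' hz.2⟩⟩
  -- decomposition as a disjoint union
  have hdecomp : ∀ p : Finset α → Prop, ∀ _ : DecidablePred p,
      ((X.powersetCard (k + l)).filter (fun C => ∃ A ∈ F, A ⊆ C)).filter p
      = F.biUnion (fun A => (X.powersetCard (k + l)).filter (fun C => A ⊆ C ∧ p C)) := by
    intro p _
    ext C
    simp only [Finset.mem_filter, Finset.mem_biUnion]
    tauto
  have hdisj : ∀ p : Finset α → Prop, ∀ _ : DecidablePred p, ∀ A ∈ F, ∀ B ∈ F, A ≠ B →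
      Disjoint ((X.powersetCard (k + l)).filter (fun C => A ⊆ C ∧ p C))
        ((X.powersetCard (k + l)).filter (fun C => B ⊆ C ∧ p C)) := by
    intro p _ A hA B hB hne
    rw [Finset.disjoint_left]
    intro C h1 h2
    simp only [Finset.mem_filter] at h1 h2
    exact hne (huniq A hA B hB C h1.1 h1.2.1 h2.2.1)
  constructor
  · -- regular
    intro x hx y hy
    have key : ∀ z ∈ X,
        (((X.powersetCard (k + l)).filter (fun C => ∃ A ∈ F, A ⊆ C)).filter
          (fun C => z ∈ C)).card
        = (F.filter (fun A => z ∈ A)).card * (X.card - k).choose l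
          + (F.card - (F.filter (fun A => z ∈ A)).card) * (X.card - k - 1).choose (l - 1) := by
      intro z hz
      rw [hdecomp (fun C => z ∈ C) _, Finset.card_biUnion (hdisj (fun C => z ∈ C) _)]
      have hterm : ∀ A ∈ F,
          ((X.powersetCard (k + l)).filter (fun C => A ⊆ C ∧ z ∈ C)).card
          = if z ∈ A then (X.card - k).choose l else (X.card - k - 1).choose (l - 1) := by
        intro A hA
        by_cases hzA : z ∈ A
        · rw [if_pos hzA]
          have : ((X.powersetCard (k + l)).filter (fun C => A ⊆ C ∧ z ∈ C))
              = ((X.powersetCard (k + l)).filter (fun C => A ⊆ C)) := by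
            apply Finset.filter_congr
            intro C _
            simp only [and_iff_left_iff_imp]
            exact fun h => h hzA
          rw [this, count_sup_aux X A (hFX A hA) _ (by rw [hFk A hA]; omega), hFk A hA]
          congr 1
          omega
        · rw [if_neg hzA]
          have : ((X.powersetCard (k + l)).filter (fun C => A ⊆ C ∧ z ∈ C))
              = ((X.powersetCard (k + l)).filter (fun C => insert z A ⊆ C)) := by
            apply Finset.filter_congr
            intro C _
            simp [Finset.insert_subset_iff, and_comm]
          rw [this, count_sup_aux X (insert z A)
              (Finset.insert_subset hz (hFX A hA)) _ ?_]
          · rw [Finset.card_insert_of_notMem hzA, hFk A hA]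
            congr 1 <;> omega
          · rw [Finset.card_insert_of_notMem hzA, hFk A hA]; omega
      rw [Finset.sum_congr rfl hterm, Finset.sum_ite, Finset.sum_const, Finset.sum_const,
        smul_eq_mul, smul_eq_mul, Finset.filter_not, Finset.card_sdiff_of_subset (Finset.filter_subset _ _)]
    rw [key x hx, key y hy, hFreg x hx y hy]
  · -- cardinality
    have heq : ((X.powersetCard (k + l)).filter (fun C => ∃ A ∈ F, A ⊆ C))
        = F.biUnion (fun A => (X.powersetCard (k + l)).filter (fun C => A ⊆ C)) := by
      ext C
      simp only [Finset.mem_filter, Finset.mem_biUnion]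
      tauto
    have hdisj' : ∀ A ∈ F, ∀ B ∈ F, A ≠ B →
        Disjoint ((X.powersetCard (k + l)).filter (fun C => A ⊆ C))
          ((X.powersetCard (k + l)).filter (fun C => B ⊆ C)) := by
      intro A hA B hB hne
      rw [Finset.disjoint_left]
      intro C h1 h2
      simp only [Finset.mem_filter] at h1 h2
      exact hne (huniq A hA B hB C h1.1 h1.2 h2.2)
    rw [heq, Finset.card_biUnion hdisj']
    have hterm : ∀ A ∈ F, ((X.powersetCard (k + l)).filter (fun C => A ⊆ C)).card
        = (X.card - k).choose l := by
      intro A hA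
      rw [count_sup_aux X A (hFX A hA) _ (by rw [hFk A hA]; omega), hFk A hA]
      congr 1
      omega
    rw [Finset.sum_congr rfl hterm, Finset.sum_const, smul_eq_mul, mul_comm]
end

section
/- Under the assumptions of the previous construction, each F' ∈ F^l contains a unique member F of F; consequently the families F^l(F) := {F' ∈ binom(X,k+l) : F' ⊇ F}, for F ∈ F, partition F^l. -/
theorem unique_member {α : Type*} [DecidableEq α] (X : Finset α)
    (k l : ℕ) (hl : 1 ≤ l)
    (F : Finset (Finset α))
    (hFX : ∀ A ∈ F, A ⊆ X)
    (hFk : ∀ A ∈ F, A.card = k)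
    (hFint : ∀ A ∈ F, ∀ A' ∈ F, (A ∩ A').Nonempty)
    (hmin : ∀ A ∈ F, ∀ B ∈ F, A ≠ B → l < (A \ B).card) :
    ∀ C ∈ (X.powersetCard (k + l)).filter (fun C => ∃ A ∈ F, A ⊆ C),
      ∃! A, A ∈ F ∧ A ⊆ C := by
  intro C hC
  simp only [Finset.mem_filter, Finset.mem_powersetCard] at hC
  obtain ⟨⟨hCX, hCcard⟩, A, hA, hAC⟩ := hC
  refine ⟨A, ⟨hA, hAC⟩, ?_⟩
  rintro B ⟨hB, hBC⟩
  by_contra hne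
  have h1 : l < (B \ A).card := hmin B hB A hA hne
  have h2 : B \ A ⊆ C \ A := Finset.sdiff_subset_sdiff hBC (le_refl A)
  have h3 : (C \ A).card = l := by
    rw [Finset.card_sdiff_of_subset hAC, hCcard, hFk A hA]
    omega
  have := Finset.card_le_card h2
  omega
end

section
/- For k ≥ 2, the integer 2k-1 divides C(2k-1, k), but 2 does not divide C(2k-1, k) when k is a power of 2. -/
/-! Since `k * C(n, k) = n * C(n - 1, k - 1)`, `n` divides `C(n, k)` whenever `n` and `k` are
coprime, and `2k - 1` is coprime to `k`. For `k = 2 ^ t` we have `2k - 1 = 2 ^ (t + 1) - 1`, all of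
whose binary digits are `1`, so by Lucas's theorem every binomial coefficient in its row is odd. -/

namespace Nat

theorem Coprime.dvd_choose {n k : ℕ} (h : n.Coprime k) : n ∣ n.choose k := by
  rcases n with _ | n
  · simp_all
  rcases k with _ | k
  · simp_all
  apply h.dvd_of_dvd_mul_right
  exact ⟨_, (add_one_mul_choose_eq n k).symm⟩

theorem coprime_two_mul_sub_one_self {k : ℕ} (hk : 1 ≤ k) : (2 * k - 1).Coprime k := by
  obtain ⟨j, rfl⟩ := Nat.exists_eq_add_of_le' hk
  rw [show 2 * (j + 1) - 1 = j + (j + 1) by omega, coprime_add_self_left]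
  exact coprime_self_add_right.mpr (coprime_one_right j)

-- Lucas's theorem for `p = 2`, peeling off the last binary digit of `2 ^ s - 1`, which is `1`.
theorem odd_choose_two_pow_sub_one {s m : ℕ} (hm : m < 2 ^ s) : Odd ((2 ^ s - 1).choose m) := by
  induction s generalizing m with
  | zero =>
    obtain rfl : m = 0 := by simpa using hm
    simp
  | succ s ih =>
    have hrow : 2 ^ (s + 1) - 1 = 1 + 2 * (2 ^ s - 1) := by
      have := Nat.one_le_two_pow (n := s); rw [pow_succ]; omega
    have lucas := Choose.choose_modEq_choose_mod_mul_choose_div_nat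
      (p := 2) (n := 2 ^ (s + 1) - 1) (k := m)
    have hmod : (2 ^ (s + 1) - 1) % 2 = 1 := by omega
    have hdiv : (2 ^ (s + 1) - 1) / 2 = 2 ^ s - 1 := by omega
    have hdigit : choose 1 (m % 2) = 1 := by
      rcases mod_two_eq_zero_or_one m with h | h <;> simp [h]
    rw [hmod, hdiv, hdigit, one_mul] at lucas
    have hhalf : m / 2 < 2 ^ s := by rw [pow_succ] at hm; omega
    exact odd_iff.mpr (Eq.trans lucas (odd_iff.mp (ih hhalf)))

end Nat

theorem divisibility (k : ℕ) (hk : 2 ≤ k) :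
    (2 * k - 1) ∣ (2 * k - 1).choose k ∧
    (∀ t : ℕ, 1 ≤ t → k = 2 ^ t → ¬ 2 ∣ (2 * k - 1).choose k) := by
  refine ⟨(Nat.coprime_two_mul_sub_one_self (by omega)).dvd_choose, ?_⟩
  rintro t - rfl
  rw [← pow_succ']
  exact (Nat.odd_choose_two_pow_sub_one (Nat.pow_lt_pow_succ one_lt_two)).not_two_dvd_nat
end

section
/- Let k be a power of 2 with k ≥ 2, and let F be a regular intersecting family of k-element subsets of [2k]. Then |F| ≤ C(2k-1, k) - 3. -/
/-!
Fix a point `x`. Sending each member `B` of `F` to whichever of `B`, `Bᶜ` contains `x` is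
injective on an intersecting family, so it embeds `F` into the `C(2k-1, k-1)` sets of size `k`
through `x`. Double counting gives `|F| = 2 deg x`, while `C(2k-1, k-1)` is odd by Lucas'
theorem since `2k` is a power of two; so an odd number of `k`-sets through `x` are missed.
That number is not `1`: if only `A₀` were missed, pick `y ∉ A₀`. The `k`-sets through `x`
avoiding `y` number `C(2k-2, k-1)`, which is even, and those that are hit are the images of the
members of `F` separating `x` from `y`, an even number by regularity; yet `A₀` would be the only
one missed.
-/

open Finset

theorem Nat.odd_choose_two_pow_sub_one_s16 : ∀ {s j : ℕ}, j < 2 ^ s → Odd ((2 ^ s - 1).choose j)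
  | 0, j, hj => by simp_all
  | s + 1, j, hj => by
    have := Fact.mk Nat.prime_two
    have lucas := Choose.choose_modEq_choose_mod_mul_choose_div_nat
      (n := 2 ^ (s + 1) - 1) (k := j) (p := 2)
    have hpos : 0 < 2 ^ s := Nat.two_pow_pos s
    have hchoose_one : Nat.choose 1 (j % 2) = 1 := by
      rcases Nat.mod_two_eq_zero_or_one j with h | h <;> simp [h]
    rw [pow_succ] at hj lucas ⊢
    rw [show (2 ^ s * 2 - 1) % 2 = 1 by omega, show (2 ^ s * 2 - 1) / 2 = 2 ^ s - 1 by omega,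
      hchoose_one, one_mul] at lucas
    rw [Nat.odd_iff, lucas, ← Nat.odd_iff]
    exact Nat.odd_choose_two_pow_sub_one_s16 (by omega)

section SeparatingSets

variable {α : Type*} [DecidableEq α]

lemma card_filter_separating_add_two_mul (F : Finset (Finset α)) (x y : α) :
    #{A ∈ F | x ∈ A ↔ y ∉ A} + 2 * #{A ∈ F | x ∈ A ∧ y ∈ A} =
      #{A ∈ F | x ∈ A} + #{A ∈ F | y ∈ A} := by
  simp only [card_filter, mul_sum, ← sum_add_distrib]
  refine sum_congr rfl fun A _ => ?_
  by_cases hx : x ∈ A <;> by_cases hy : y ∈ A <;> simp [hx, hy]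

lemma even_card_filter_separating {F : Finset (Finset α)} {x y : α}
    (hreg : #{A ∈ F | x ∈ A} = #{A ∈ F | y ∈ A}) : Even #{A ∈ F | x ∈ A ↔ y ∉ A} := by
  have := card_filter_separating_add_two_mul F x y
  exact ⟨#{A ∈ F | x ∈ A} - #{A ∈ F | x ∈ A ∧ y ∈ A}, by omega⟩

end SeparatingSets

section HalfSizedSets

variable {α : Type*} [Fintype α] [DecidableEq α] {F : Finset (Finset α)} {k : ℕ} {x y : α}

def sideContaining (x : α) (B : Finset α) : Finset α := if x ∈ B then B else Bᶜ

lemma mem_sideContaining (x : α) (B : Finset α) : x ∈ sideContaining x B := by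
  unfold sideContaining; split_ifs with h <;> simp [h]

lemma notMem_sideContaining_iff {B : Finset α} :
    y ∉ sideContaining x B ↔ (x ∈ B ↔ y ∉ B) := by
  unfold sideContaining; split_ifs with h <;> simp [h]

lemma card_sideContaining {B : Finset α} (hB : Fintype.card α = 2 * #B) :
    #(sideContaining x B) = #B := by
  unfold sideContaining; split_ifs
  · rfl
  · rw [card_compl]; omega

lemma injOn_sideContaining (hF : (F : Set (Finset α)).Intersecting) (x : α) :
    Set.InjOn (sideContaining x) F := by
  intro A hA B hB hAB
  unfold sideContaining at hAB
  split_ifs at hAB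
  · exact hAB
  · exact absurd (hAB ▸ hA) (hF.compl_notMem hB)
  · exact absurd (hAB.symm ▸ hB) (hF.compl_notMem hA)
  · exact compl_injective hAB

lemma even_card_of_regular {r : ℕ} (hα : Fintype.card α = 2 * k) (hk : 0 < k)
    (hcard : ∀ A ∈ F, #A = k) (hreg : ∀ a, #{A ∈ F | a ∈ A} = r) : Even #F := by
  have hsum := sum_card hreg
  rw [sum_const_nat hcard, hα] at hsum
  exact ⟨r, Nat.eq_of_mul_eq_mul_right hk (by linarith)⟩

def setsThrough (k : ℕ) (x : α) : Finset (Finset α) := {S ∈ univ.powersetCard k | x ∈ S}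

lemma card_setsThrough (hk : 0 < k) (x : α) :
    #(setsThrough k x) = (Fintype.card α - 1).choose (k - 1) := by
  simpa [setsThrough] using
    card_filter_powersetCard_subset {x} univ k (subset_univ _) (by rw [card_singleton]; exact hk)

lemma card_filter_notMem_setsThrough (hk : 0 < k) (hxy : x ≠ y) :
    #{S ∈ setsThrough k x | y ∉ S} = (Fintype.card α - 2).choose (k - 1) := by
  have := card_filter_powersetCard_subset {x} (univ.erase y) k (by simpa using hxy)
    (by rw [card_singleton]; exact hk)
  rw [card_erase_of_mem (mem_univ y), card_univ, card_singleton, Nat.sub_sub] at this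
  rw [← this, setsThrough, filter_filter]
  congr 1
  ext S
  simp only [mem_filter, mem_powersetCard, subset_univ, true_and, subset_erase,
    singleton_subset_iff]
  tauto

lemma image_sideContaining_subset_setsThrough (hα : Fintype.card α = 2 * k)
    (hcard : ∀ A ∈ F, #A = k) : F.image (sideContaining x) ⊆ setsThrough k x := by
  intro S hS
  obtain ⟨B, hB, rfl⟩ := mem_image.mp hS
  simp only [setsThrough, mem_filter, mem_powersetCard_univ]
  exact ⟨(card_sideContaining (hcard B hB ▸ hα)).trans (hcard B hB), mem_sideContaining x B⟩

lemma even_card_filter_notMem_sdiff_image (hα : Fintype.card α = 2 * k) (hk : 2 ≤ k)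
    (hcard : ∀ A ∈ F, #A = k) (hF : (F : Set (Finset α)).Intersecting) (hxy : x ≠ y)
    (hreg : #{A ∈ F | x ∈ A} = #{A ∈ F | y ∈ A}) :
    Even #{S ∈ setsThrough k x \ F.image (sideContaining x) | y ∉ S} := by
  set G := F.image (sideContaining x)
  have hsplit : #{S ∈ setsThrough k x | y ∉ S} =
      #{S ∈ G | y ∉ S} + #{S ∈ setsThrough k x \ G | y ∉ S} := by
    rw [← card_sdiff_add_card_eq_card (filter_subset_filter (y ∉ ·)
      (image_sideContaining_subset_setsThrough hα hcard)), add_comm]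
    congr 2
    ext S
    simp only [mem_filter, mem_sdiff]
    tauto
  have hhit : #{S ∈ G | y ∉ S} = #{A ∈ F | x ∈ A ↔ y ∉ A} := by
    rw [filter_image, card_image_of_injOn ((injOn_sideContaining hF x).mono (filter_subset _ _))]
    simp only [notMem_sideContaining_iff]
  have hall : Even #{S ∈ setsThrough k x | y ∉ S} := by
    rw [card_filter_notMem_setsThrough (by omega) hxy, hα, show 2 * k - 2 = 2 * (k - 1) by omega,
      ← Nat.centralBinom_eq_two_mul_choose]
    exact even_iff_two_dvd.mpr (Nat.two_dvd_centralBinom_of_one_le (by omega))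
  rw [hsplit, hhit] at hall
  exact (Nat.even_add.mp hall).mp (even_card_filter_separating hreg)

lemma card_sdiff_image_sideContaining_ne_one (hα : Fintype.card α = 2 * k) (hk : 2 ≤ k)
    (hcard : ∀ A ∈ F, #A = k) (hF : (F : Set (Finset α)).Intersecting)
    (hreg : ∀ y, #{A ∈ F | x ∈ A} = #{A ∈ F | y ∈ A}) :
    #(setsThrough k x \ F.image (sideContaining x)) ≠ 1 := by
  intro h
  obtain ⟨A₀, hA₀⟩ := card_eq_one.mp h
  have hA₀mem : A₀ ∈ setsThrough k x := mem_sdiff.mp (hA₀ ▸ mem_singleton_self A₀) |>.1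
  simp only [setsThrough, mem_filter, mem_powersetCard_univ] at hA₀mem
  obtain ⟨y, hy⟩ : A₀ᶜ.Nonempty := by
    rw [← card_pos, card_compl, hA₀mem.1, hα]; omega
  have hxy : x ≠ y := by rintro rfl; exact mem_compl.mp hy hA₀mem.2
  have := even_card_filter_notMem_sdiff_image hα hk hcard hF hxy (hreg y)
  rw [hA₀, filter_singleton, if_pos (mem_compl.mp hy), card_singleton] at this
  exact Nat.not_even_one this

end HalfSizedSets

theorem power_of_two_bound (k : ℕ) (hk : 2 ≤ k) (ht : ∃ t : ℕ, k = 2 ^ t)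
    (F : Finset (Finset (Fin (2 * k))))
    (hcard : ∀ A ∈ F, A.card = k)
    (hint : ∀ A ∈ F, ∀ B ∈ F, (A ∩ B).Nonempty)
    (hreg : ∀ x y : Fin (2 * k),
      (F.filter (fun A => x ∈ A)).card = (F.filter (fun A => y ∈ A)).card) :
    F.card ≤ (2 * k - 1).choose k - 3 := by
  obtain ⟨t, htk⟩ := ht
  have hα : Fintype.card (Fin (2 * k)) = 2 * k := Fintype.card_fin _
  have hF : (F : Set (Finset (Fin (2 * k)))).Intersecting := fun A hA B hB =>
    not_disjoint_iff_nonempty_inter.mpr (hint A hA B hB)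
  let x : Fin (2 * k) := ⟨0, by omega⟩
  have hsub := image_sideContaining_subset_setsThrough (x := x) hα hcard
  have himage : #(F.image (sideContaining x)) = #F :=
    card_image_of_injOn (injOn_sideContaining hF x)
  have hle := card_le_card hsub
  have hmissed := card_sdiff_image_sideContaining_ne_one hα hk hcard hF (hreg x)
  rw [card_sdiff_of_subset hsub] at hmissed
  have hthrough : #(setsThrough k x) = (2 * k - 1).choose k := by
    rw [card_setsThrough (by omega), hα, ← Nat.choose_symm (by omega)]
    congr 1; omega
  have hodd : Odd #(setsThrough k x) := by
    rw [card_setsThrough (by omega), hα, show 2 * k = 2 ^ (t + 1) by rw [htk, pow_succ']]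
    exact Nat.odd_choose_two_pow_sub_one_s16 (by rw [pow_succ']; omega)
  obtain ⟨a, ha⟩ := even_card_of_regular hα (by omega) hcard fun y => hreg y x
  obtain ⟨b, hb⟩ := hodd
  omega
end
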